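/- For all i, j ∈ V with i ≠ j one has σ_i(σ_j(t_i · t_j)) = σ_i(t_i) · σ_j(t_j), and for all pairwise distinct i, j, k ∈ V one has σ_i(σ_k(t_j)) · t_j = σ_i(t_j) · σ_k(t_j). (That is, the TGW datum (R_E, σ^Γ, t^Γ) attached to a multiquiver satisfies the twisted generalized Weyl consistency equations with all parameters μ_{ij} = 1.) -/
import Mathlib


open MvPolynomial

/-- The defining property of the incidence matrix of a multiquiver: every row has
at most one positive and at most one negative entry. -/
def CondM {V E : Type*} (γ : E → V → ℤ) : Prop :=
  ∀ e : E, (∀ v w : V, 0 < γ e v → 0 < γ e w → v = w) ∧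
    (∀ v w : V, γ e v < 0 → γ e w < 0 → v = w)

/-- `u_{ev} = u_e(u_e+1)⋯(u_e+c−1)` if `c = γ e v > 0`,
`(u_e−1)(u_e−2)⋯(u_e−|c|)` if `c < 0`, and `1` if `c = 0`. -/
noncomputable def uev (K : Type*) [Field K] {E : Type*} (e : E) (c : ℤ) :
    MvPolynomial E K :=
  if 0 < c then ∏ k ∈ Finset.range c.toNat, (X e + C (k : K))
  else ∏ m ∈ Finset.range (-c).toNat, (X e - C ((m : K) + 1))

/-- `t_v = ∏_{e∈E} u_{ev}`. -/
noncomputable def tGamma (K : Type*) [Field K] {V E : Type*} [Fintype E]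
    (γ : E → V → ℤ) (v : V) : MvPolynomial E K :=
  ∏ e : E, uev K e (γ e v)


noncomputable def ush (K : Type*) [Field K] {E : Type*} (e : E) (c s : ℤ) :
    MvPolynomial E K :=
  if 0 < c then ∏ k ∈ Finset.range c.toNat, (X e - C ((s : ℤ) : K) + C (k : K))
  else ∏ m ∈ Finset.range (-c).toNat, (X e - C ((s : ℤ) : K) - C ((m : K) + 1))

lemma ush_zero_shift (K : Type*) [Field K] {E : Type*} (e : E) (c : ℤ) :
    ush K e c 0 = (if 0 < c then ∏ k ∈ Finset.range c.toNat, (X e + C (k : K))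
  else ∏ m ∈ Finset.range (-c).toNat, (X e - C ((m : K) + 1))) := by
  unfold ush
  split_ifs <;> refine Finset.prod_congr rfl fun k _ => ?_ <;> push_cast <;>
    simp only [map_zero, map_add, map_sub, map_neg, map_one] <;> ring

lemma ush_len_zero (K : Type*) [Field K] {E : Type*} (e : E) (s : ℤ) :
    ush K e 0 s = 1 := by
  simp [ush]

lemma sigma_ush {K V E : Type*} [Field K]
    (γ : E → V → ℤ) (σ : V → (MvPolynomial E K ≃ₐ[K] MvPolynomial E K))
    (hσ : ∀ (v : V) (e : E), σ v (X e) = X e - C ((γ e v : ℤ) : K))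
    (v : V) (e : E) (c s : ℤ) :
    σ v (ush K e c s) = ush K e c (s + γ e v) := by
  unfold ush
  have hc : ∀ r : K, σ v (C r) = C r := fun r => by
    simpa [MvPolynomial.algebraMap_eq] using (σ v).commutes r
  split_ifs <;> rw [map_prod] <;> refine Finset.prod_congr rfl fun k _ => ?_ <;>
    simp only [map_sub, map_add, hσ, hc] <;> push_cast <;>
    simp only [map_zero, map_add, map_sub, map_neg, map_one] <;> ring

-- helper to put linear factors in normal form X e + C r
lemma lin1 {K E : Type*} [Field K] (e : E) (u v : K) :
    X e - C u + C v = X e + C (v - u) := by rw [map_sub]; ring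

lemma lin2 {K E : Type*} [Field K] (e : E) (u v : K) :
    X e - C u - C (v + 1) = X e + C (-u - v - 1) := by
  simp only [map_sub, map_neg, map_add, map_one]; ring

lemma key {K : Type*} [Field K] {E : Type*} (e : E) (a b : ℤ)
    (ha : 0 < a) (hb : b < 0) :
    ush K e a (a + b) * ush K e b (a + b) = ush K e a a * ush K e b b := by
  set A := a.toNat with hA'
  set D := (-b).toNat with hD'
  have hA : ((A : ℤ) : K) = (a : K) := by
    rw [hA']; exact_mod_cast congrArg (Int.cast : ℤ → K) (Int.toNat_of_nonneg ha.le)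
  have hD : ((D : ℤ) : K) = ((-b : ℤ) : K) := by
    rw [hD']; exact_mod_cast congrArg (Int.cast : ℤ → K) (Int.toNat_of_nonneg (by omega))
  push_cast at hA hD
  have hb' : ¬ 0 < b := by omega
  rw [ush, ush, ush, ush, if_pos ha, if_pos ha, if_neg hb', if_neg hb']
  set F : ℕ → MvPolynomial E K := fun t => X e + C ((t : K) - (a : K)) with hF
  have e1 : ∀ k ∈ Finset.range A, (X e - C (((a + b : ℤ)) : K) + C (k : K)) = F (D + k) := by
    intro k _
    rw [lin1, hF]
    congr 1
    push_cast
    rw [hD]; ring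
  have e2 : ∀ m ∈ Finset.range D,
      (X e - C (((a + b : ℤ)) : K) - C ((m : K) + 1)) = F (D - 1 - m) := by
    intro m hm
    rw [Finset.mem_range] at hm
    rw [lin2, hF]
    congr 1
    have : ((D - 1 - m : ℕ) : K) = (D : K) - 1 - (m : K) := by
      have h1 : (D - 1 - m : ℕ) = D - (m + 1) := by omega
      rw [h1, Nat.cast_sub (by omega)]
      push_cast; ring
    rw [this]
    push_cast
    rw [hD]; ring
  have e3 : ∀ k ∈ Finset.range A, (X e - C ((a : ℤ) : K) + C (k : K)) = F k := by
    intro k _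
    rw [lin1, hF]
  have e4 : ∀ m ∈ Finset.range D,
      (X e - C ((b : ℤ) : K) - C ((m : K) + 1)) = F (A + D - 1 - m) := by
    intro m hm
    rw [Finset.mem_range] at hm
    rw [lin2, hF]
    congr 1
    have : ((A + D - 1 - m : ℕ) : K) = (A : K) + (D : K) - 1 - (m : K) := by
      have h1 : (A + D - 1 - m : ℕ) = A + D - (m + 1) := by omega
      rw [h1, Nat.cast_sub (by omega)]
      push_cast; ring
    rw [this, hA, hD]; ring
  rw [Finset.prod_congr rfl e1, Finset.prod_congr rfl e2,
      Finset.prod_congr rfl e3, Finset.prod_congr rfl e4]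
  have r1 : ∏ m ∈ Finset.range D, F (D - 1 - m) = ∏ m ∈ Finset.range D, F m :=
    Finset.prod_range_reflect F D
  have r2 : ∏ m ∈ Finset.range D, F (A + D - 1 - m)
      = ∏ m ∈ Finset.range D, F (A + (D - 1 - m)) := by
    refine Finset.prod_congr rfl fun m hm => ?_
    rw [Finset.mem_range] at hm
    congr 1
    omega
  have r3 : ∏ m ∈ Finset.range D, F (A + (D - 1 - m)) = ∏ m ∈ Finset.range D, F (A + m) :=
    Finset.prod_range_reflect (fun t => F (A + t)) D
  rw [r1, r2, r3, mul_comm (∏ k ∈ Finset.range A, F (D + k)),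
      ← Finset.prod_range_add F D A, ← Finset.prod_range_add F A D,
      Nat.add_comm D A]

lemma key' {K : Type*} [Field K] {E : Type*} (e : E) (a b : ℤ)
    (h1 : ¬(0 < a ∧ 0 < b)) (h2 : ¬(a < 0 ∧ b < 0)) :
    ush K e a (a + b) * ush K e b (a + b) = ush K e a a * ush K e b b := by
  rcases lt_trichotomy a 0 with ha | ha | ha
  · rcases lt_trichotomy b 0 with hb | hb | hb
    · exact absurd ⟨ha, hb⟩ h2
    · subst hb; rw [add_zero, ush_len_zero, ush_len_zero]
    · have := key (K := K) e b a hb ha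
      rw [add_comm] at this
      rw [mul_comm, this, mul_comm]
  · subst ha; rw [zero_add, ush_len_zero, ush_len_zero]
  · rcases lt_trichotomy b 0 with hb | hb | hb
    · exact key e a b ha hb
    · subst hb; rw [add_zero, ush_len_zero, ush_len_zero]
    · exact absurd ⟨ha, hb⟩ h1

lemma key2 {K : Type*} [Field K] {E : Type*} (e : E) (b s t : ℤ)
    (h : b = 0 ∨ s = 0 ∨ t = 0) :
    ush K e b (t + s) * ush K e b 0 = ush K e b s * ush K e b t := by
  rcases h with rfl | rfl | rfl
  · simp [ush_len_zero]
  · rw [add_zero, mul_comm]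
  · rw [zero_add]

/-- The TGW datum `(R_E, σ^Γ, t^Γ)` attached to a multiquiver `Γ` satisfies the
twisted generalized Weyl consistency equations with all parameters `μ_{ij} = 1`:
for `i ≠ j`, `σ_i σ_j (t_i t_j) = σ_i(t_i) σ_j(t_j)`, and for pairwise distinct
`i, j, k`, `σ_i σ_k (t_j) · t_j = σ_i(t_j) · σ_k(t_j)`. -/
theorem tgw_consistency {K V E : Type*} [Field K] [CharZero K] [Fintype V] [Fintype E]
    (γ : E → V → ℤ) (hM : CondM γ)
    (σ : V → (MvPolynomial E K ≃ₐ[K] MvPolynomial E K))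
    (hσ : ∀ (v : V) (e : E), σ v (X e) = X e - C ((γ e v : ℤ) : K)) :
    (∀ i j : V, i ≠ j →
        σ i (σ j (tGamma K γ i * tGamma K γ j)) = σ i (tGamma K γ i) * σ j (tGamma K γ j)) ∧
      (∀ i j k : V, i ≠ j → j ≠ k → i ≠ k →
        σ i (σ k (tGamma K γ j)) * tGamma K γ j = σ i (tGamma K γ j) * σ k (tGamma K γ j)) := by
  have ht : ∀ v : V, tGamma K γ v = ∏ e : E, ush K e (γ e v) 0 := fun v =>
    Finset.prod_congr rfl fun e _ => (ush_zero_shift K e (γ e v)).symm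
  constructor
  · intro i j hij
    rw [ht, ht]
    simp only [map_mul, map_prod, sigma_ush γ σ hσ, zero_add]
    rw [← Finset.prod_mul_distrib, ← Finset.prod_mul_distrib]
    refine Finset.prod_congr rfl fun e _ => ?_
    rw [add_comm (γ e j) (γ e i)]
    exact key' e (γ e i) (γ e j)
      (fun h => hij ((hM e).1 i j h.1 h.2))
      (fun h => hij ((hM e).2 i j h.1 h.2))
  · intro i j k hij hjk hik
    rw [ht]
    simp only [map_prod, sigma_ush γ σ hσ, zero_add]
    rw [← Finset.prod_mul_distrib, ← Finset.prod_mul_distrib]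
    refine Finset.prod_congr rfl fun e _ => ?_
    refine key2 e (γ e j) (γ e i) (γ e k) ?_
    by_contra h
    push_neg at h
    obtain ⟨h1, h2, h3⟩ := h
    obtain ⟨hp, hn⟩ := hM e
    rcases lt_trichotomy (γ e j) 0 with hj | hj | hj
    · have hi : 0 < γ e i := by
        rcases lt_trichotomy (γ e i) 0 with h | h | h
        · exact absurd (hn i j h hj) hij
        · exact absurd h h2
        · exact h
      have hk : 0 < γ e k := by
        rcases lt_trichotomy (γ e k) 0 with h | h | h
        · exact absurd (hn k j h hj) (fun hh => hjk hh.symm)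
        · exact absurd h h3
        · exact h
      exact hik (hp i k hi hk)
    · exact h1 hj
    · have hi : γ e i < 0 := by
        rcases lt_trichotomy (γ e i) 0 with h | h | h
        · exact h
        · exact absurd h h2
        · exact absurd (hp i j h hj) hij
      have hk : γ e k < 0 := by
        rcases lt_trichotomy (γ e k) 0 with h | h | h
        · exact h
        · exact absurd h h3
        · exact absurd (hp k j h hj) (fun hh => hjk hh.symm)
      exact hik (hn i k hi hk)
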